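/- Let F be a number field acting on a nonzero finite-dimensional ℚ-vector space V (so V is an F-vector space), and let U be an F-invariant ℂ-subspace of V ⊗_ℚ ℂ such that V ⊗_ℚ ℂ is the internal direct sum of U and σ(U). If the only ℂ-linear map σ(U) → U commuting with the action of every element of F is the zero map, then F has no real embeddings: there is no ring homomorphism F → ℝ. -/

import Mathlib

/-!
A real embedding `φ` gives a character `χ : F → ℂ` fixed by complex conjugation. The
`χ`-eigenspace of `F` on `V ⊗ ℂ` is nonzero, since `χ` of a primitive element is a root of its
characteristic polynomial. It splits along `U ⊕ σ(U)`, both summands being `F`-stable, and it is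
`σ`-stable, `χ` being real; so it meets both `U` and `σ(U)` nontrivially. As `F ⊗ ℂ` is split
semisimple, the projection onto this eigenspace is a polynomial in a primitive element, hence
`F`-equivariant; composed with a linear form and an eigenvector in `U` it gives a nonzero
`F`-equivariant map `σ(U) → U`.
-/

open scoped TensorProduct

noncomputable section

instance : RingHomSurjective (starRingEnd ℂ) :=
  ⟨fun z => ⟨star z, by simp⟩⟩

/-- Complex conjugation as a `ℚ`-linear map on `ℂ`. -/
def conjQLin : ℂ →ₗ[ℚ] ℂ where
  toFun z := (starRingEnd ℂ) z
  map_add' := by intros; simp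
  map_smul' := by intro q z; simp [Rat.smul_def, map_mul]

/-- The antilinear involution `σ` on `ℂ ⊗[ℚ] V` determined by conjugation on the
first factor, packaged as a `starRingEnd ℂ`-semilinear map. -/
def sigmaV (V : Type*) [AddCommGroup V] [Module ℚ V] :
    (ℂ ⊗[ℚ] V) →ₛₗ[starRingEnd ℂ] (ℂ ⊗[ℚ] V) where
  toFun := TensorProduct.map conjQLin LinearMap.id
  map_add' := map_add _
  map_smul' c x := by
    induction x using TensorProduct.induction_on with
    | zero => simp
    | tmul z v =>
        simp [TensorProduct.smul_tmul', smul_eq_mul, conjQLin, map_mul]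
    | add x y hx hy =>
        simp only [smul_add, map_add]
        exact congrArg₂ (· + ·) hx hy

/-- `σ(U)`, the image of a `ℂ`-subspace `U` of `ℂ ⊗[ℚ] V` under the conjugation
involution; it is again a `ℂ`-subspace. -/
def sigmaSub {V : Type*} [AddCommGroup V] [Module ℚ V]
    (U : Submodule ℂ (ℂ ⊗[ℚ] V)) : Submodule ℂ (ℂ ⊗[ℚ] V) :=
  U.map (sigmaV V)

/-- A `ℂ`-linear map `f : P → Q` between subspaces of `ℂ ⊗[ℚ] V` commutes with an
operator `T` of the ambient space. -/
def CommutesWith {V : Type*} [AddCommGroup V] [Module ℚ V]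
    (P Q : Submodule ℂ (ℂ ⊗[ℚ] V)) (f : P →ₗ[ℂ] Q)
    (T : (ℂ ⊗[ℚ] V) →ₗ[ℂ] (ℂ ⊗[ℚ] V)) : Prop :=
  ∀ (x : P) (hx : T ↑x ∈ P), (f ⟨T ↑x, hx⟩ : ℂ ⊗[ℚ] V) = T ↑(f x)

/-- `E` is a polarization of the weight-one rational Hodge structure `(V, U)`:
it is alternating, its `ℂ`-bilinear extension vanishes on `U × U`, and
`-i·E_ℂ(u, σ u)` is a positive real for every nonzero `u ∈ U`. -/
def IsPolarization {V : Type*} [AddCommGroup V] [Module ℚ V]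
    (U : Submodule ℂ (ℂ ⊗[ℚ] V)) (E : V →ₗ[ℚ] V →ₗ[ℚ] ℚ) : Prop :=
  (∀ x : V, E x x = 0) ∧
  (∀ u ∈ U, ∀ u' ∈ U, LinearMap.BilinForm.baseChange ℂ E u u' = 0) ∧
  (∀ u ∈ U, u ≠ 0 → ∃ r : ℝ, 0 < r ∧
    -Complex.I * LinearMap.BilinForm.baseChange ℂ E u (sigmaV V u) = (r : ℂ))


/-- Scalar multiplication by `a : 𝒜` as a `ℚ`-linear endomorphism of `V`. -/
def smulLin (𝒜 : Type*) [CommRing 𝒜] [Algebra ℚ 𝒜]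
    (V : Type*) [AddCommGroup V] [Module ℚ V] [Module 𝒜 V] [IsScalarTower ℚ 𝒜 V]
    (a : 𝒜) : V →ₗ[ℚ] V where
  toFun v := a • v
  map_add' := smul_add a
  map_smul' q v := smul_comm a q v


open Polynomial Module

section JointEigenspace

variable {ι K M : Type*} [CommRing K] [AddCommGroup M] [Module K M]

def jointEigenspace (f : ι → End K M) (χ : ι → K) : Submodule K M :=
  ⨅ i, End.eigenspace (f i) (χ i)

theorem mem_jointEigenspace_iff {f : ι → End K M} {χ : ι → K} {y : M} :
    y ∈ jointEigenspace f χ ↔ ∀ i, f i y = χ i • y := by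
  simp only [jointEigenspace, Submodule.mem_iInf, End.mem_eigenspace_iff]

theorem mem_jointEigenspace_of_isCompl {f : ι → End K M} {χ : ι → K} {p q : Submodule K M}
    (hpq : IsCompl p q) (hp : ∀ i, ∀ u ∈ p, f i u ∈ p) (hq : ∀ i, ∀ s ∈ q, f i s ∈ q)
    {u s : M} (hu : u ∈ p) (hs : s ∈ q) (h : u + s ∈ jointEigenspace f χ) :
    u ∈ jointEigenspace f χ := by
  rw [mem_jointEigenspace_iff] at h ⊢
  intro i
  have hsum : (f i u - χ i • u) + (f i s - χ i • s) = 0 := by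
    rw [sub_add_sub_comm, ← map_add, ← smul_add, h i, sub_self]
  have hup : f i u - χ i • u ∈ p := p.sub_mem (hp i u hu) (p.smul_mem _ hu)
  have huq : f i u - χ i • u ∈ q := by
    rw [eq_neg_of_add_eq_zero_left hsum]
    exact q.neg_mem (q.sub_mem (hq i s hs) (q.smul_mem _ hs))
  exact sub_eq_zero.mp (Submodule.disjoint_def.mp hpq.disjoint _ hup huq)

variable {k F : Type*} [CommRing k] [CommRing F] [Algebra k F] [Algebra k K] [Module k M]
  [IsScalarTower k K M]

theorem mem_jointEigenspace_of_apply_gen_eq_smul {Φ : F →ₐ[k] End K M} {χ : F →ₐ[k] K}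
    (pb : PowerBasis k F) {y : M} (hy : Φ pb.gen y = χ pb.gen • y) :
    y ∈ jointEigenspace Φ χ := by
  rw [mem_jointEigenspace_iff]
  intro x
  obtain ⟨g, rfl⟩ := pb.exists_eq_aeval' x
  rw [← aeval_algHom_apply, ← aeval_algHom_apply, ← aeval_map_algebraMap K,
    End.aeval_apply_of_mem_apply_eq_smul hy, eval_map_algebraMap]

end JointEigenspace

theorem exists_commute_projection_jointEigenspace {k F K M : Type*} [Field k] [Field F]
    [Algebra k F] [FiniteDimensional k F] [Algebra.IsSeparable k F] [CommRing K] [Algebra k K]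
    [AddCommGroup M] [Module K M] [Module k M] [IsScalarTower k K M]
    (Φ : F →ₐ[k] End K M) (χ : F →ₐ[k] K) :
    ∃ π : End K M, (∀ x, Commute (Φ x) π) ∧ (∀ y, π y ∈ jointEigenspace Φ χ) ∧
      ∀ y ∈ jointEigenspace Φ χ, π y = y := by
  let pb := Field.powerBasisOfFiniteOfSeparable k F
  set T := Φ pb.gen
  set r := χ pb.gen
  set p := (minpoly k pb.gen).map (algebraMap k K)
  have hpT : aeval T p = 0 := by
    rw [aeval_map_algebraMap, aeval_algHom_apply, minpoly.aeval, map_zero]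
  have hpr : p.IsRoot r := by
    rw [IsRoot, eval_map_algebraMap, aeval_algHom_apply, minpoly.aeval, map_zero]
  obtain ⟨q, hq⟩ := dvd_iff_isRoot.mpr hpr
  have hsep : ((X - C r) * q).Separable :=
    hq ▸ Polynomial.Separable.map (Algebra.IsSeparable.isSeparable k pb.gen)
  obtain ⟨a, b, hab⟩ := hsep.isCoprime
  have hT : ∀ y ∈ jointEigenspace Φ χ, T y = r • y := fun y hy =>
    mem_jointEigenspace_iff.mp hy pb.gen
  -- `b q` takes the value `1` at the simple root `r`, while `(X - r) b q` is a multiple of `p`,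
  -- which kills `T`: so `b(T) q(T)` is the projection onto the `r`-eigenspace of `T`.
  refine ⟨aeval T (b * q), fun x => ?_, fun y => ?_, fun y hy => ?_⟩
  · refine Algebra.commute_of_mem_adjoin_singleton_of_commute
      (aeval_mem_adjoin_singleton K T) ?_
    rw [Commute, SemiconjBy, ← map_mul, ← map_mul, mul_comm]
  · refine mem_jointEigenspace_of_apply_gen_eq_smul pb (sub_eq_zero.mp ?_)
    have hT_kills : aeval T ((X - C r) * (b * q)) = 0 := by
      rw [mul_left_comm, ← hq, map_mul, hpT, mul_zero]
    simpa [sub_smul, Module.algebraMap_end_apply] using congr($hT_kills y)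
  · have hbq : (b * q).eval r = 1 := by
      simpa using congr(eval r $hab)
    rw [End.aeval_apply_of_mem_apply_eq_smul (hT y hy), hbq, one_smul]

section BaseChange

variable (K F V : Type*) [CommRing K] [Algebra ℚ K] [CommRing F] [Algebra ℚ F]
  [AddCommGroup V] [Module ℚ V] [Module F V] [IsScalarTower ℚ F V]

def baseChangeAction : F →ₐ[ℚ] End K (K ⊗[ℚ] V) :=
  (End.baseChangeHom ℚ K V).comp (Algebra.lsmul ℚ ℚ V)

theorem baseChangeAction_apply (x : F) :
    baseChangeAction K F V x = (smulLin F V x).baseChange K :=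
  rfl

end BaseChange

theorem exists_ne_zero_mem_jointEigenspace_baseChangeAction (K F V : Type*) [Field K]
    [Algebra ℚ K] [Field F] [NumberField F] [AddCommGroup V] [Module ℚ V] [FiniteDimensional ℚ V]
    [Nontrivial V] [Module F V] [IsScalarTower ℚ F V] (χ : F →ₐ[ℚ] K) :
    ∃ w ≠ 0, w ∈ jointEigenspace (baseChangeAction K F V) χ := by
  let pb := Field.powerBasisOfFiniteOfSeparable ℚ F
  set A := smulLin F V pb.gen
  have hA : aeval pb.gen A.charpoly = 0 :=
    (Algebra.lsmul ℚ ℚ V).toRingHom.injective <| by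
      rw [map_zero, AlgHom.toRingHom_eq_coe, AlgHom.coe_toRingHom, ← aeval_algHom_apply]
      exact LinearMap.aeval_self_charpoly A
  have hroot : (baseChangeAction K F V pb.gen).charpoly.IsRoot (χ pb.gen) := by
    rw [baseChangeAction_apply, LinearMap.charpoly_baseChange, IsRoot, eval_map_algebraMap,
      aeval_algHom_apply, hA, map_zero]
  obtain ⟨w, hw⟩ := ((End.hasEigenvalue_iff_isRoot_charpoly _ _).mpr hroot).exists_hasEigenvector
  exact ⟨w, hw.2, mem_jointEigenspace_of_apply_gen_eq_smul pb hw.apply_eq_smul⟩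

section Conjugation

variable {V : Type*} [AddCommGroup V] [Module ℚ V]

theorem sigmaV_tmul (z : ℂ) (v : V) : sigmaV V (z ⊗ₜ[ℚ] v) = (starRingEnd ℂ) z ⊗ₜ[ℚ] v :=
  rfl

theorem sigmaV_sigmaV (y : ℂ ⊗[ℚ] V) : sigmaV V (sigmaV V y) = y := by
  induction y using TensorProduct.induction_on with
  | zero => simp only [map_zero]
  | tmul z v => rw [sigmaV_tmul, sigmaV_tmul, Complex.conj_conj]
  | add a b ha hb => rw [map_add, map_add, ha, hb]

theorem sigmaV_injective : Function.Injective (sigmaV V) :=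
  Function.LeftInverse.injective sigmaV_sigmaV

theorem sigmaV_baseChange (f : V →ₗ[ℚ] V) (y : ℂ ⊗[ℚ] V) :
    sigmaV V (f.baseChange ℂ y) = f.baseChange ℂ (sigmaV V y) := by
  induction y using TensorProduct.induction_on with
  | zero => simp only [map_zero]
  | tmul z v => rw [LinearMap.baseChange_tmul, sigmaV_tmul, sigmaV_tmul, LinearMap.baseChange_tmul]
  | add a b ha hb => rw [map_add, map_add, map_add, map_add, ha, hb]

theorem sigmaV_mem_sigmaSub_iff {U : Submodule ℂ (ℂ ⊗[ℚ] V)} {y : ℂ ⊗[ℚ] V} :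
    sigmaV V y ∈ sigmaSub U ↔ y ∈ U :=
  ⟨fun ⟨_, hu, h⟩ => sigmaV_injective h ▸ hu, fun hy => ⟨y, hy, rfl⟩⟩

variable {F : Type*} [CommRing F] [Algebra ℚ F] [Module F V] [IsScalarTower ℚ F V]

theorem sigmaV_mem_jointEigenspace {χ : F →ₐ[ℚ] ℂ} (hχ : ∀ x, (starRingEnd ℂ) (χ x) = χ x)
    {y : ℂ ⊗[ℚ] V} (hy : y ∈ jointEigenspace (baseChangeAction ℂ F V) χ) :
    sigmaV V y ∈ jointEigenspace (baseChangeAction ℂ F V) χ := by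
  rw [mem_jointEigenspace_iff] at hy ⊢
  intro x
  rw [baseChangeAction_apply, ← sigmaV_baseChange, ← baseChangeAction_apply, hy x,
    LinearMap.map_smulₛₗ, hχ]

theorem baseChangeAction_mem_sigmaSub {U : Submodule ℂ (ℂ ⊗[ℚ] V)}
    (hU : ∀ x : F, ∀ u ∈ U, baseChangeAction ℂ F V x u ∈ U) (x : F) {y : ℂ ⊗[ℚ] V}
    (hy : y ∈ sigmaSub U) : baseChangeAction ℂ F V x y ∈ sigmaSub U := by
  obtain ⟨u, hu, rfl⟩ := hy
  rw [baseChangeAction_apply, ← sigmaV_baseChange]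
  exact Submodule.mem_map_of_mem (hU x u hu)

end Conjugation

theorem exists_ne_zero_mem_jointEigenspace_of_isCompl_sigmaSub {F V : Type*} [Field F]
    [NumberField F] [AddCommGroup V] [Module ℚ V] [FiniteDimensional ℚ V] [Nontrivial V]
    [Module F V] [IsScalarTower ℚ F V] {U : Submodule ℂ (ℂ ⊗[ℚ] V)}
    (hU : ∀ x : F, ∀ u ∈ U, baseChangeAction ℂ F V x u ∈ U) (hcompl : IsCompl U (sigmaSub U))
    {χ : F →ₐ[ℚ] ℂ} (hχ : ∀ x, (starRingEnd ℂ) (χ x) = χ x) :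
    ∃ u ∈ U, u ≠ 0 ∧ u ∈ jointEigenspace (baseChangeAction ℂ F V) χ := by
  obtain ⟨w, hw0, hw⟩ := exists_ne_zero_mem_jointEigenspace_baseChangeAction ℂ F V χ
  obtain ⟨u, hu, s, hs, rfl⟩ := Submodule.mem_sup.mp
    (hcompl.sup_eq_top ▸ Submodule.mem_top : w ∈ U ⊔ sigmaSub U)
  have hσU := baseChangeAction_mem_sigmaSub hU
  by_cases hu0 : u = 0
  · refine ⟨sigmaV V s, sigmaV_mem_sigmaSub_iff.mp ?_, ?_, sigmaV_mem_jointEigenspace hχ ?_⟩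
    · rwa [sigmaV_sigmaV]
    · exact (map_ne_zero_iff _ sigmaV_injective).mpr fun hs0 => hw0 (by rw [hu0, hs0, add_zero])
    · exact mem_jointEigenspace_of_isCompl hcompl.symm hσU hU hs hu (add_comm u s ▸ hw)
  · exact ⟨u, hu, hu0, mem_jointEigenspace_of_isCompl hcompl hU hσU hu hs hw⟩

theorem exists_commutesWith_ne_zero {V F : Type*} [AddCommGroup V] [Module ℚ V] [Field F]
    [NumberField F] (Φ : F →ₐ[ℚ] End ℂ (ℂ ⊗[ℚ] V)) (χ : F →ₐ[ℚ] ℂ)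
    {P Q : Submodule ℂ (ℂ ⊗[ℚ] V)} {w u : ℂ ⊗[ℚ] V} (hw : w ∈ P) (hw0 : w ≠ 0)
    (hwχ : w ∈ jointEigenspace Φ χ) (hu : u ∈ Q) (hu0 : u ≠ 0)
    (huχ : u ∈ jointEigenspace Φ χ) :
    ∃ f : P →ₗ[ℂ] Q, (∀ x, CommutesWith P Q f (Φ x)) ∧ f ≠ 0 := by
  obtain ⟨π, hπΦ, hπχ, hπ_fix⟩ := exists_commute_projection_jointEigenspace Φ χ
  obtain ⟨ℓ, hℓ⟩ : ∃ ℓ : Dual ℂ (ℂ ⊗[ℚ] V), ℓ w ≠ 0 := by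
    by_contra! h
    exact hw0 ((Module.forall_dual_apply_eq_zero_iff ℂ w).mp h)
  let f : P →ₗ[ℂ] Q := (ℓ ∘ₗ π ∘ₗ P.subtype).smulRight ⟨u, hu⟩
  have hf : ∀ y : P, (f y : ℂ ⊗[ℚ] V) = ℓ (π y) • u := fun _ => rfl
  refine ⟨f, fun x y hy => ?_, fun h => ?_⟩
  · have hπy := mem_jointEigenspace_iff.mp (hπχ y) x
    rw [hf, hf, map_smul, mem_jointEigenspace_iff.mp huχ x, ← Module.End.mul_apply,
      ← (hπΦ x).eq, Module.End.mul_apply, hπy, map_smul, smul_comm, smul_assoc]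
  · have hfw := hf ⟨w, hw⟩
    rw [h, LinearMap.zero_apply, hπ_fix w hwχ] at hfw
    exact smul_ne_zero hℓ hu0 (by simpa using hfw.symm)

/-- If a number field `F` acts rigidly on a nonzero weight-one rational Hodge structure,
then `F` has no real embeddings. -/
theorem rigid_numberField_action_no_real_embedding
    (F : Type*) [Field F] [NumberField F]
    (V : Type*) [AddCommGroup V] [Module ℚ V] [FiniteDimensional ℚ V] [Nontrivial V]
    [Module F V] [IsScalarTower ℚ F V]
    (U : Submodule ℂ (ℂ ⊗[ℚ] V))
    (hinv : ∀ x : F, ∀ v ∈ U, LinearMap.baseChange ℂ (smulLin F V x) v ∈ U)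
    (hcompl : IsCompl U (sigmaSub U))
    (hrigid : ∀ f : sigmaSub U →ₗ[ℂ] U,
      (∀ x : F, CommutesWith (sigmaSub U) U f
        (LinearMap.baseChange ℂ (smulLin F V x))) → f = 0) :
    IsEmpty (F →+* ℝ) := by
  refine ⟨fun φ => ?_⟩
  let χ : F →ₐ[ℚ] ℂ := (Complex.ofRealHom.comp φ).toRatAlgHom
  have hχ : ∀ x, (starRingEnd ℂ) (χ x) = χ x := fun x => Complex.conj_ofReal (φ x)
  obtain ⟨u, hu, hu0, huχ⟩ :=
    exists_ne_zero_mem_jointEigenspace_of_isCompl_sigmaSub hinv hcompl hχ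
  obtain ⟨f, hf, hf0⟩ := exists_commutesWith_ne_zero (baseChangeAction ℂ F V) χ
    (sigmaV_mem_sigmaSub_iff.mpr hu) ((map_ne_zero_iff _ sigmaV_injective).mpr hu0)
    (sigmaV_mem_jointEigenspace hχ huχ) hu hu0 huχ
  exact hf0 (hrigid f hf)

end
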